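/- Let Y be a real-valued random variable on a probability space and let ȳ ∈ ℝ be such that P(Y = ȳ) = 0. Then E[ĩ_ε(Y − ȳ)] → P(Y ≤ ȳ) as ε → 0⁺. In particular, the chance constraint P(Y ≤ ȳ) ≥ 1 − α is the limiting form of the surrogate constraint E[ĩ_ε(Y − ȳ)] ≥ 1 − α. -/

import Mathlib

/-!
For fixed `x ≠ 0`, `ĩ_ε(x) = 1 / (1 + e^{x/ε})` tends to `1` if `x < 0` and to `0` if `x > 0` as
`ε → 0⁺`, i.e. to the indicator of `x ≤ 0`. Since `0 ≤ ĩ_ε ≤ 1` and `Y ≠ ȳ` almost surely, dominated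
convergence turns this pointwise limit into the limit of the expectations, and the expectation of
the indicator of `{Y ≤ ȳ}` is `P(Y ≤ ȳ)`.
-/

open MeasureTheory

/-- The logistic surrogate of the indicator function:
`ĩ_ε(x) = e^{-x/ε} / (1 + e^{-x/ε})`. -/
noncomputable def logisticSurrogate (ε x : ℝ) : ℝ :=
  Real.exp (-x / ε) / (1 + Real.exp (-x / ε))

open Filter Topology Set

lemma logisticSurrogate_eq_inv (ε x : ℝ) :
    logisticSurrogate ε x = (Real.exp (x / ε) + 1)⁻¹ := by
  rw [logisticSurrogate, neg_div, Real.exp_neg]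
  field_simp

lemma logisticSurrogate_nonneg (ε x : ℝ) : 0 ≤ logisticSurrogate ε x := by
  rw [logisticSurrogate_eq_inv]
  positivity

lemma logisticSurrogate_le_one (ε x : ℝ) : logisticSurrogate ε x ≤ 1 := by
  rw [logisticSurrogate_eq_inv]
  exact inv_le_one_of_one_le₀ (le_add_of_nonneg_left (Real.exp_pos _).le)

lemma norm_logisticSurrogate_le_one (ε x : ℝ) : ‖logisticSurrogate ε x‖ ≤ 1 := by
  rw [Real.norm_of_nonneg (logisticSurrogate_nonneg ε x)]
  exact logisticSurrogate_le_one ε x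

lemma continuous_logisticSurrogate (ε : ℝ) : Continuous (logisticSurrogate ε) := by
  simp only [funext (logisticSurrogate_eq_inv ε)]
  exact ((continuous_id.div_const ε).rexp.add continuous_const).inv₀
    fun x => (add_pos (Real.exp_pos _) one_pos).ne'

lemma tendsto_logisticSurrogate_of_neg {x : ℝ} (hx : x < 0) :
    Tendsto (fun ε => logisticSurrogate ε x) (𝓝[>] 0) (𝓝 1) := by
  have hdiv : Tendsto (fun ε => x / ε) (𝓝[>] 0) atBot := by
    simpa only [div_eq_mul_inv] using tendsto_inv_nhdsGT_zero.const_mul_atTop_of_neg hx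
  have hden : Tendsto (fun ε => Real.exp (x / ε) + 1) (𝓝[>] 0) (𝓝 1) := by
    simpa only [zero_add, Function.comp_apply] using
      (Real.tendsto_exp_atBot.comp hdiv).add_const (1 : ℝ)
  simpa only [logisticSurrogate_eq_inv, inv_one] using hden.inv₀ one_ne_zero

lemma tendsto_logisticSurrogate_of_pos {x : ℝ} (hx : 0 < x) :
    Tendsto (fun ε => logisticSurrogate ε x) (𝓝[>] 0) (𝓝 0) := by
  have hdiv : Tendsto (fun ε => x / ε) (𝓝[>] 0) atTop := by
    simpa only [div_eq_mul_inv] using tendsto_inv_nhdsGT_zero.const_mul_atTop hx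
  have hden : Tendsto (fun ε => Real.exp (x / ε) + 1) (𝓝[>] 0) atTop :=
    (Real.tendsto_exp_atTop.comp hdiv).atTop_add tendsto_const_nhds
  simp only [logisticSurrogate_eq_inv]
  exact hden.inv_tendsto_atTop

lemma tendsto_logisticSurrogate_indicator {x : ℝ} (hx : x ≠ 0) :
    Tendsto (fun ε => logisticSurrogate ε x) (𝓝[>] 0) (𝓝 ((Iic 0).indicator 1 x)) := by
  rcases hx.lt_or_gt with hneg | hpos
  · rw [indicator_of_mem (mem_Iic.mpr hneg.le), Pi.one_apply]
    exact tendsto_logisticSurrogate_of_neg hneg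
  · rw [indicator_of_notMem (notMem_Iic.mpr hpos)]
    exact tendsto_logisticSurrogate_of_pos hpos

theorem tendsto_integral_logisticSurrogate {Ω : Type*} [MeasurableSpace Ω] (μ : Measure Ω)
    [IsFiniteMeasure μ] {X : Ω → ℝ} (hX : Measurable X) (hzero : μ {ω | X ω = 0} = 0) :
    Tendsto (fun ε => ∫ ω, logisticSurrogate ε (X ω) ∂μ) (𝓝[>] 0)
      (𝓝 (μ.real {ω | X ω ≤ 0})) := by
  have hne : ∀ᵐ ω ∂μ, X ω ≠ 0 := measure_eq_zero_iff_ae_notMem.mp hzero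
  have hle : MeasurableSet {ω | X ω ≤ 0} := hX measurableSet_Iic
  rw [← integral_indicator_one hle]
  refine tendsto_integral_filter_of_dominated_convergence (fun _ => 1)
    (Eventually.of_forall fun ε =>
      ((continuous_logisticSurrogate ε).measurable.comp hX).aestronglyMeasurable)
    (Eventually.of_forall fun ε => ae_of_all μ fun ω => norm_logisticSurrogate_le_one ε (X ω))
    (integrable_const 1) ?_
  filter_upwards [hne] with ω hω
  have hlim := tendsto_logisticSurrogate_indicator hω
  rwa [← indicator_comp_right] at hlim

theorem expectation_logisticSurrogate_tendsto_prob
    {Ω : Type*} [MeasurableSpace Ω] (μ : Measure Ω) [IsProbabilityMeasure μ]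
    (Y : Ω → ℝ) (hY : Measurable Y) (ybar : ℝ)
    (hzero : μ {ω | Y ω = ybar} = 0) :
    Filter.Tendsto (fun ε : ℝ => ∫ ω, logisticSurrogate ε (Y ω - ybar) ∂μ)
      (nhdsWithin 0 (Set.Ioi 0)) (nhds (μ {ω | Y ω ≤ ybar}).toReal) := by
  simp_rw [← sub_eq_zero (b := ybar)] at hzero
  simpa only [sub_nonpos, measureReal_def] using
    tendsto_integral_logisticSurrogate μ (hY.sub_const ybar) hzero
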